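/- Let R be an integral domain that is not a field. Then R is semiprimitive (its Jacobson radical is zero) if and only if the group of units U(R) is not open in the Macías topology on R \ {0}. -/

import Mathlib

/-- For nonzero `k`, the basic set `σₖ⁰ = {s ≠ 0 : ⟨k⟩ + ⟨s⟩ = R}` of the Macías topology. -/
def sigma0 (R : Type*) [CommRing R] (k : R) : Set {x : R // x ≠ 0} :=
  {s | Ideal.span {k} + Ideal.span {s.1} = ⊤}

/-- The Macías topology on `R \ {0}`, generated by the sets `σₖ⁰` for `k ≠ 0`. -/
def maciasTop (R : Type*) [CommRing R] : TopologicalSpace {x : R // x ≠ 0} :=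
  TopologicalSpace.generateFrom {U | ∃ k : R, k ≠ 0 ∧ U = sigma0 R k}

/-!
A nonzero `k` lies in the Jacobson radical exactly when every `s` comaximal with `k` is a unit,
i.e. when `σₖ⁰ ⊆ U(R)`; for a unit `k` this inclusion would make every nonzero element a unit,
which is where `R` not being a field enters. Since the sets `σₖ⁰` form a basis
(`σₐ⁰ ∩ σ_b⁰ = σ_{ab}⁰`), `U(R)` is open iff it contains a basic neighbourhood of `1`, i.e. iff
the radical contains a nonzero element; and then `U(R) = σₖ⁰` for any such `k`.
-/

open Ideal

section

variable {R : Type*} [CommRing R]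

lemma mem_sigma0_iff {k : R} {s : {x : R // x ≠ 0}} : s ∈ sigma0 R k ↔ IsCoprime k s.1 := by
  rw [sigma0, Set.mem_ofPred_eq, Submodule.add_eq_sup, ← isCoprime_iff_sup_eq,
    isCoprime_span_singleton_iff]

lemma sigma0_one : sigma0 R 1 = Set.univ :=
  Set.eq_univ_of_forall fun _ ↦ mem_sigma0_iff.2 isCoprime_one_left

lemma sigma0_mul (a b : R) : sigma0 R (a * b) = sigma0 R a ∩ sigma0 R b := by
  ext s
  simp only [Set.mem_inter_iff, mem_sigma0_iff, IsCoprime.mul_left_iff]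

lemma isTopologicalBasis_sigma0 [IsDomain R] :
    @TopologicalSpace.IsTopologicalBasis _ (maciasTop R) {U | ∃ k : R, k ≠ 0 ∧ U = sigma0 R k} :=
  let := maciasTop R
  { exists_subset_inter := by
      rintro _ ⟨a, ha, rfl⟩ _ ⟨b, hb, rfl⟩ s hs
      exact ⟨sigma0 R (a * b), ⟨a * b, mul_ne_zero ha hb, rfl⟩, (sigma0_mul a b).symm ▸ hs,
        (sigma0_mul a b).le⟩
    sUnion_eq := Set.sUnion_eq_univ_iff.2 fun _ ↦
      ⟨_, ⟨1, one_ne_zero, rfl⟩, by rw [sigma0_one]; trivial⟩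
    eq_generateFrom := rfl }

lemma isCoprime_of_isUnit_right {k u : R} (hu : IsUnit u) : IsCoprime k u :=
  (isCoprime_zero_left.2 hu).of_isCoprime_of_dvd_left (dvd_zero k)

lemma isUnit_of_isCoprime_of_mem_jacobson_bot {k s : R} (hk : k ∈ jacobson (⊥ : Ideal R))
    (h : IsCoprime k s) : IsUnit s := by
  obtain ⟨a, b, hab⟩ := h
  have hbs : b * s = k * -a + 1 := by linear_combination hab
  exact isUnit_of_mul_isUnit_right (hbs ▸ mem_jacobson_bot.1 hk (-a))

lemma sigma0_eq_setOf_isUnit {k : R} (hk : k ∈ jacobson (⊥ : Ideal R)) :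
    sigma0 R k = {x | IsUnit x.1} := by
  ext s
  rw [mem_sigma0_iff]
  exact ⟨isUnit_of_isCoprime_of_mem_jacobson_bot hk, isCoprime_of_isUnit_right⟩

lemma sigma0_subset_setOf_isUnit_iff [Nontrivial R] (hR : ¬IsField R) {k : R} :
    sigma0 R k ⊆ {x | IsUnit x.1} ↔ k ∈ jacobson (⊥ : Ideal R) := by
  refine ⟨fun h ↦ ?_, fun hk ↦ (sigma0_eq_setOf_isUnit hk).le⟩
  have hk : ¬IsUnit k := by
    intro hk
    obtain ⟨x, hx, hxu⟩ := Ring.exists_not_isUnit_of_not_isField hR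
    exact hxu (@h ⟨x, hx⟩ (mem_sigma0_iff.2 (isCoprime_of_isUnit_right hk).symm))
  refine mem_jacobson_bot.2 fun y ↦ ?_
  have hne : k * y + 1 ≠ 0 := fun h0 ↦ hk (.of_mul_eq_one (-y) (by linear_combination -h0))
  exact @h ⟨_, hne⟩ (mem_sigma0_iff.2 ⟨-y, 1, by ring⟩)

end

theorem stmt9 (R : Type*) [CommRing R] [IsDomain R] (hnf : ¬ IsField R) :
    (⊥ : Ideal R).jacobson = ⊥ ↔
      ¬ @IsOpen _ (maciasTop R) {x : {x : R // x ≠ 0} | IsUnit x.1} := by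
  let := maciasTop R
  constructor
  · intro hjac hopen
    obtain ⟨_, ⟨k, hk, rfl⟩, -, hsub⟩ :=
      isTopologicalBasis_sigma0.isOpen_iff.1 hopen ⟨1, one_ne_zero⟩ isUnit_one
    have hkjac := (sigma0_subset_setOf_isUnit_iff hnf).1 hsub
    exact hk (by rwa [hjac, Submodule.mem_bot] at hkjac)
  · contrapose!
    intro hjac
    obtain ⟨k, hkjac, hk⟩ := Submodule.exists_mem_ne_zero_of_ne_bot hjac
    rw [← sigma0_eq_setOf_isUnit hkjac]
    exact .basic _ ⟨k, hk, rfl⟩
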